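/- Sharp upper bound with one regressor: let X_o and Y be real square-integrable random variables with Var(X_o) > 0, observed only via marginals. Then the supremum over couplings (X̃,Ỹ) of the slope coefficient Cov(X̃,Ỹ)/Var(X̃) equals E[(F_{X_o}^{-1}(U) − E[X_o]) F_Y^{-1}(U)] / Var(X_o), where U ~ Uniform[0,1], and this supremum is attained. -/

import Mathlib

/-!
Hoeffding's identity `x y = ∫∫ (1{x > s} - 1{0 > s}) (1{y > t} - 1{0 > t}) ds dt` and Fubini write
`E[XY]` under a coupling `π` as the integral over `(s, t)` of the joint survival function
`π(X > s, Y > t)` plus terms that only depend on the marginals. The Fréchet–Hoeffding bound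
`π(X > s, Y > t) ≤ min (P(X > s), P(Y > t))` is attained by the comonotone coupling
`(F_X⁻¹(U), F_Y⁻¹(U))`, which therefore maximizes `E[XY]` and hence the slope.
-/

open MeasureTheory Set Filter

/-- Generalized inverse (quantile function) of the cdf of a measure `μ` on `ℝ`. -/
noncomputable def qf (μ : Measure ℝ) (t : ℝ) : ℝ :=
  sInf {x | t ≤ (μ (Set.Iic x)).toReal}

open ProbabilityTheory Topology

noncomputable def hoeffdingKernel (s x : ℝ) : ℝ := (Ioi s).indicator 1 x - (Ioi s).indicator 1 0

lemma hoeffdingKernel_eq_indicator (s x : ℝ) :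
    hoeffdingKernel s x = (Ico 0 x).indicator 1 s - (Ico x 0).indicator (1 : ℝ → ℝ) s := by
  simp only [hoeffdingKernel, indicator_apply, mem_Ioi, mem_Ico, Pi.one_apply]
  split_ifs <;> grind

lemma norm_hoeffdingKernel_eq_indicator (s x : ℝ) :
    ‖hoeffdingKernel s x‖ = (Ico 0 x).indicator 1 s + (Ico x 0).indicator (1 : ℝ → ℝ) s := by
  simp only [hoeffdingKernel_eq_indicator, indicator_apply, mem_Ico, Pi.one_apply]
  split_ifs with hpos hneg <;> norm_num
  linarith [hpos.1, hneg.2]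

lemma integrable_indicator_one_Ico (a b : ℝ) : Integrable ((Ico a b).indicator (1 : ℝ → ℝ)) :=
  (integrable_indicator_iff measurableSet_Ico).2 (integrableOn_const measure_Ico_lt_top.ne)

lemma integrable_hoeffdingKernel (x : ℝ) : Integrable (hoeffdingKernel · x) := by
  simp_rw [hoeffdingKernel_eq_indicator]
  exact (integrable_indicator_one_Ico _ _).sub (integrable_indicator_one_Ico _ _)

lemma integral_hoeffdingKernel (x : ℝ) : ∫ s, hoeffdingKernel s x = x := by
  simp_rw [hoeffdingKernel_eq_indicator]
  rw [integral_sub (integrable_indicator_one_Ico _ _) (integrable_indicator_one_Ico _ _),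
    integral_indicator_one measurableSet_Ico, integral_indicator_one measurableSet_Ico,
    Real.volume_real_Ico, Real.volume_real_Ico]
  rcases le_total 0 x with h | h <;> simp [h]

lemma integral_norm_hoeffdingKernel (x : ℝ) : ∫ s, ‖hoeffdingKernel s x‖ = |x| := by
  simp_rw [norm_hoeffdingKernel_eq_indicator]
  rw [integral_add (integrable_indicator_one_Ico _ _) (integrable_indicator_one_Ico _ _),
    integral_indicator_one measurableSet_Ico, integral_indicator_one measurableSet_Ico,
    Real.volume_real_Ico, Real.volume_real_Ico]
  rcases le_total 0 x with h | h <;> simp [h, abs_of_nonneg, abs_of_nonpos]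

@[fun_prop]
lemma measurable_hoeffdingKernel : Measurable fun z : ℝ × ℝ => hoeffdingKernel z.1 z.2 :=
  (measurable_const.indicator (measurableSet_lt measurable_fst measurable_snd)).sub
    (measurable_const.indicator (measurableSet_lt measurable_fst measurable_const))

section HoeffdingIdentity

variable {π : Measure (ℝ × ℝ)}

lemma integrable_hoeffdingKernel_mul_prod [SFinite π]
    (hint : Integrable (fun q : ℝ × ℝ => q.1 * q.2) π) :
    Integrable (fun z : (ℝ × ℝ) × (ℝ × ℝ) =>
      hoeffdingKernel z.2.1 z.1.1 * hoeffdingKernel z.2.2 z.1.2) (π.prod volume) := by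
  rw [integrable_prod_iff (by fun_prop)]
  refine ⟨.of_forall fun q => ?_, ?_⟩
  · rw [Measure.volume_eq_prod]
    exact (integrable_hoeffdingKernel q.1).mul_prod (integrable_hoeffdingKernel q.2)
  · refine hint.abs.congr (.of_forall fun q => ?_)
    simp only [Measure.volume_eq_prod, norm_mul]
    rw [integral_prod_mul (‖hoeffdingKernel · q.1‖) (‖hoeffdingKernel · q.2‖),
      integral_norm_hoeffdingKernel, integral_norm_hoeffdingKernel, abs_mul]

lemma integral_mul_eq_integral_integral_hoeffdingKernel [SFinite π]
    (hint : Integrable (fun q : ℝ × ℝ => q.1 * q.2) π) :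
    ∫ q, q.1 * q.2 ∂π =
      ∫ p : ℝ × ℝ, ∫ q, hoeffdingKernel p.1 q.1 * hoeffdingKernel p.2 q.2 ∂π := by
  rw [← integral_integral_swap (integrable_hoeffdingKernel_mul_prod hint)]
  congr 1 with q
  rw [Measure.volume_eq_prod, integral_prod_mul (hoeffdingKernel · q.1) (hoeffdingKernel · q.2),
    integral_hoeffdingKernel, integral_hoeffdingKernel]

lemma integral_hoeffdingKernel_mul [IsFiniteMeasure π] (s t : ℝ) :
    ∫ q, hoeffdingKernel s q.1 * hoeffdingKernel t q.2 ∂π =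
      π.real (Ioi s ×ˢ Ioi t) - (Ioi s).indicator 1 0 * π.snd.real (Ioi t)
        - (Ioi t).indicator 1 0 * π.fst.real (Ioi s)
        + (Ioi s).indicator 1 0 * (Ioi t).indicator 1 0 * π.real univ := by
  set c : ℝ := (Ioi s).indicator 1 0
  set d : ℝ := (Ioi t).indicator 1 0
  have hS : MeasurableSet (Prod.fst ⁻¹' Ioi s : Set (ℝ × ℝ)) := measurable_fst measurableSet_Ioi
  have hT : MeasurableSet (Prod.snd ⁻¹' Ioi t : Set (ℝ × ℝ)) := measurable_snd measurableSet_Ioi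
  have hST : MeasurableSet (Ioi s ×ˢ Ioi t) := measurableSet_Ioi.prod measurableSet_Ioi
  have expand : (fun q : ℝ × ℝ => hoeffdingKernel s q.1 * hoeffdingKernel t q.2) = fun q =>
      (Ioi s ×ˢ Ioi t).indicator 1 q - c * (Prod.snd ⁻¹' Ioi t).indicator 1 q
        - d * (Prod.fst ⁻¹' Ioi s).indicator 1 q + c * d := by
    ext ⟨x, y⟩
    simp only [hoeffdingKernel, c, d, indicator_apply, mem_prod, Pi.one_apply]
    split_ifs <;> simp_all
  have hind : ∀ {A : Set (ℝ × ℝ)}, MeasurableSet A → Integrable (A.indicator (1 : ℝ × ℝ → ℝ)) π :=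
    fun hA => (integrable_const 1).indicator hA
  have hT' := (hind hT).const_mul c
  have hS' := (hind hS).const_mul d
  have hST' : Integrable (fun q =>
      (Ioi s ×ˢ Ioi t).indicator 1 q - c * (Prod.snd ⁻¹' Ioi t).indicator 1 q) π :=
    (hind hST).sub hT'
  rw [expand, integral_add ?_ (integrable_const _), integral_sub ?_ hS',
    integral_sub (hind hST) hT',
    integral_const_mul, integral_const_mul, integral_indicator_one hST, integral_indicator_one hS,
    integral_indicator_one hT, integral_const, smul_eq_mul]
  · simp only [measureReal_def, Measure.fst_apply measurableSet_Ioi,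
      Measure.snd_apply measurableSet_Ioi]
    ring
  exacts [hST', hST'.sub hS']

end HoeffdingIdentity

theorem integral_mul_le_of_measure_Ioi_prod_le {π π' : Measure (ℝ × ℝ)} [IsFiniteMeasure π]
    [IsFiniteMeasure π'] (hfst : π.fst = π'.fst) (hsnd : π.snd = π'.snd)
    (hint : Integrable (fun q : ℝ × ℝ => q.1 * q.2) π)
    (hint' : Integrable (fun q : ℝ × ℝ => q.1 * q.2) π')
    (hle : ∀ s t, π (Ioi s ×ˢ Ioi t) ≤ π' (Ioi s ×ˢ Ioi t)) :
    ∫ q, q.1 * q.2 ∂π ≤ ∫ q, q.1 * q.2 ∂π' := by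
  have huniv : π.real univ = π'.real univ := by
    rw [measureReal_def, measureReal_def, ← Measure.fst_univ, hfst, Measure.fst_univ]
  rw [integral_mul_eq_integral_integral_hoeffdingKernel hint,
    integral_mul_eq_integral_integral_hoeffdingKernel hint']
  refine integral_mono (integrable_hoeffdingKernel_mul_prod hint).integral_prod_right
    (integrable_hoeffdingKernel_mul_prod hint').integral_prod_right fun p => ?_
  simp only [integral_hoeffdingKernel_mul, hfst, hsnd, huniv]
  gcongr
  exact ENNReal.toReal_mono (measure_ne_top _ _) (hle p.1 p.2)

section Quantile

variable (μ : Measure ℝ)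

lemma nonempty_setOf_le_cdf {t : ℝ} (ht : t < 1) : {x | t ≤ cdf μ x}.Nonempty :=
  ((tendsto_cdf_atTop μ).eventually (eventually_ge_nhds ht)).exists

lemma bddBelow_setOf_le_cdf {t : ℝ} (ht : 0 < t) : BddBelow {x | t ≤ cdf μ x} := by
  obtain ⟨x, hx⟩ := ((tendsto_cdf_atBot μ).eventually (eventually_lt_nhds ht)).exists
  exact ⟨x, fun y hy => le_of_not_gt fun hyx => (hy.trans (monotone_cdf μ hyx.le)).not_gt hx⟩

variable [IsProbabilityMeasure μ]

lemma qf_eq_sInf_cdf (t : ℝ) : qf μ t = sInf {x | t ≤ cdf μ x} := by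
  simp [qf, cdf_eq_real, measureReal_def]

lemma le_cdf_qf {t : ℝ} (ht : t ∈ Ioo 0 1) : t ≤ cdf μ (qf μ t) := by
  rw [qf_eq_sInf_cdf]
  set S := {x | t ≤ cdf μ x}
  have hbdd := bddBelow_setOf_le_cdf μ ht.1
  have : (𝓝[S] sInf S).NeBot :=
    mem_closure_iff_nhdsWithin_neBot.1 (csInf_mem_closure (nonempty_setOf_le_cdf μ ht.2) hbdd)
  have hcont : ContinuousWithinAt (cdf μ) S (sInf S) :=
    ((cdf μ).right_continuous _).mono fun y hy => csInf_le hbdd hy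
  exact ge_of_tendsto hcont (eventually_nhdsWithin_of_forall fun y hy => hy)

lemma qf_le_iff_le_cdf {t x : ℝ} (ht : t ∈ Ioo 0 1) : qf μ t ≤ x ↔ t ≤ cdf μ x :=
  ⟨fun h => (le_cdf_qf μ ht).trans (monotone_cdf μ h),
    fun h => (qf_eq_sInf_cdf μ t).trans_le (csInf_le (bddBelow_setOf_le_cdf μ ht.1) h)⟩

lemma lt_qf_iff_cdf_lt {t x : ℝ} (ht : t ∈ Ioo 0 1) : x < qf μ t ↔ cdf μ x < t :=
  not_le.symm.trans ((qf_le_iff_le_cdf μ ht).not.trans not_le)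

lemma monotoneOn_qf : MonotoneOn (qf μ) (Ioo 0 1) := fun _ ha _ hb hab =>
  (qf_le_iff_le_cdf μ ha).2 (hab.trans (le_cdf_qf μ hb))

lemma aemeasurable_qf : AEMeasurable (qf μ) (volume.restrict (Ioo 0 1)) :=
  aemeasurable_restrict_of_monotoneOn measurableSet_Ioo (monotoneOn_qf μ)

lemma volume_Iic_inter_Ioo_zero_one {c : ℝ} (h1 : c ≤ 1) :
    volume (Iic c ∩ Ioo 0 1) = ENNReal.ofReal c := by
  refine le_antisymm ?_ ?_
  · calc volume (Iic c ∩ Ioo 0 1) ≤ volume (Icc 0 c) :=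
          measure_mono fun t ht => ⟨ht.2.1.le, ht.1⟩
      _ = ENNReal.ofReal c := by simp
  · calc ENNReal.ofReal c = volume (Ioo 0 c) := by simp
      _ ≤ volume (Iic c ∩ Ioo 0 1) :=
          measure_mono fun t ht => ⟨ht.2.le, ht.1, ht.2.trans_le h1⟩

lemma map_qf_restrict_Ioo : (volume.restrict (Ioo 0 1)).map (qf μ) = μ := by
  refine Measure.ext_of_Iic _ _ fun x => ?_
  have hpre : qf μ ⁻¹' Iic x ∩ Ioo 0 1 = Iic (cdf μ x) ∩ Ioo 0 1 := by
    ext t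
    simp only [mem_inter_iff, mem_preimage, mem_Iic, and_congr_left_iff]
    exact fun ht => qf_le_iff_le_cdf μ ht
  rw [Measure.map_apply_of_aemeasurable (aemeasurable_qf μ) measurableSet_Iic,
    Measure.restrict_apply' measurableSet_Ioo, hpre,
    volume_Iic_inter_Ioo_zero_one (cdf_le_one μ x), ofReal_cdf]

end Quantile

lemma measure_prod_le_min_fst_snd {α β : Type*} [MeasurableSpace α] [MeasurableSpace β]
    (π : Measure (α × β)) (A : Set α) (B : Set β) :
    π (A ×ˢ B) ≤ min (π.fst A) (π.snd B) :=
  le_min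
    ((measure_mono (prod_subset_preimage_fst A B)).trans (Measure.le_map_apply (by fun_prop) A))
    ((measure_mono (prod_subset_preimage_snd A B)).trans (Measure.le_map_apply (by fun_prop) B))

section Comonotone

variable (μ ν : Measure ℝ) [IsProbabilityMeasure μ] [IsProbabilityMeasure ν]

noncomputable def comonotoneCoupling : Measure (ℝ × ℝ) :=
  (volume.restrict (Ioo 0 1)).map fun u => (qf μ u, qf ν u)

lemma aemeasurable_qf_prod_qf :
    AEMeasurable (fun u => (qf μ u, qf ν u)) (volume.restrict (Ioo 0 1)) :=
  (aemeasurable_qf μ).prodMk (aemeasurable_qf ν)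

instance : IsProbabilityMeasure (comonotoneCoupling μ ν) :=
  have : IsProbabilityMeasure (volume.restrict (Ioo (0 : ℝ) 1)) := ⟨by simp⟩
  Measure.isProbabilityMeasure_map (aemeasurable_qf_prod_qf μ ν)

lemma comonotoneCoupling_fst : (comonotoneCoupling μ ν).fst = μ := by
  rw [Measure.fst, comonotoneCoupling, AEMeasurable.map_map_of_aemeasurable (by fun_prop)
    (aemeasurable_qf_prod_qf μ ν)]
  exact map_qf_restrict_Ioo μ

lemma comonotoneCoupling_snd : (comonotoneCoupling μ ν).snd = ν := by
  rw [Measure.snd, comonotoneCoupling, AEMeasurable.map_map_of_aemeasurable (by fun_prop)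
    (aemeasurable_qf_prod_qf μ ν)]
  exact map_qf_restrict_Ioo ν

lemma measure_Ioi_eq_ofReal_one_sub_cdf (x : ℝ) : μ (Ioi x) = ENNReal.ofReal (1 - cdf μ x) := by
  rw [← compl_Iic, prob_compl_eq_one_sub measurableSet_Iic, ← ofReal_cdf,
    ENNReal.ofReal_sub _ (cdf_nonneg μ x), ENNReal.ofReal_one]

lemma comonotoneCoupling_Ioi_prod_Ioi (s t : ℝ) :
    comonotoneCoupling μ ν (Ioi s ×ˢ Ioi t) = min (μ (Ioi s)) (ν (Ioi t)) := by
  have hpre : (fun u => (qf μ u, qf ν u)) ⁻¹' (Ioi s ×ˢ Ioi t) ∩ Ioo 0 1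
      = Ioo (max (cdf μ s) (cdf ν t)) 1 := by
    ext u
    simp only [mem_inter_iff, mem_preimage, mem_prod, mem_Ioi, mem_Ioo, max_lt_iff]
    constructor
    · rintro ⟨⟨hs, ht⟩, hu⟩
      exact ⟨⟨(lt_qf_iff_cdf_lt μ hu).1 hs, (lt_qf_iff_cdf_lt ν hu).1 ht⟩, hu.2⟩
    · rintro ⟨⟨hs, ht⟩, hu1⟩
      have hu : u ∈ Ioo (0 : ℝ) 1 := ⟨(cdf_nonneg μ s).trans_lt hs, hu1⟩
      exact ⟨⟨(lt_qf_iff_cdf_lt μ hu).2 hs, (lt_qf_iff_cdf_lt ν hu).2 ht⟩, hu⟩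
  rw [comonotoneCoupling, Measure.map_apply_of_aemeasurable (aemeasurable_qf_prod_qf μ ν)
    (measurableSet_Ioi.prod measurableSet_Ioi), Measure.restrict_apply' measurableSet_Ioo, hpre,
    Real.volume_Ioo, measure_Ioi_eq_ofReal_one_sub_cdf, measure_Ioi_eq_ofReal_one_sub_cdf,
    ← ENNReal.ofReal_min, min_sub_sub_left]

end Comonotone

section Moments

variable {μ ν : Measure ℝ} [IsProbabilityMeasure μ] [IsProbabilityMeasure ν]

lemma memLp_qf (hμ2 : Integrable (fun x => x ^ 2) μ) :
    MemLp (qf μ) 2 (volume.restrict (Ioo 0 1)) := by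
  have hid : MemLp id 2 μ := (memLp_two_iff_integrable_sq aestronglyMeasurable_id).2 hμ2
  rw [← map_qf_restrict_Ioo μ] at hid
  exact (memLp_map_measure_iff aestronglyMeasurable_id (aemeasurable_qf μ)).1 hid

lemma integral_qf : ∫ u in Ioo 0 1, qf μ u = ∫ x, x ∂μ := by
  conv_rhs => rw [← map_qf_restrict_Ioo μ]
  exact (integral_map (aemeasurable_qf μ) aestronglyMeasurable_id).symm

lemma integrable_mul_comonotoneCoupling (hμ2 : Integrable (fun x => x ^ 2) μ)
    (hν2 : Integrable (fun y => y ^ 2) ν) :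
    Integrable (fun q : ℝ × ℝ => q.1 * q.2) (comonotoneCoupling μ ν) :=
  (integrable_map_measure (by fun_prop) (aemeasurable_qf_prod_qf μ ν)).2
    ((memLp_qf hμ2).integrable_mul (memLp_qf hν2))

lemma integral_mul_comonotoneCoupling :
    ∫ q : ℝ × ℝ, q.1 * q.2 ∂(comonotoneCoupling μ ν) = ∫ u in Ioo 0 1, qf μ u * qf ν u :=
  integral_map (aemeasurable_qf_prod_qf μ ν) (by fun_prop)

end Moments

/-- Sharp upper bound on the slope with one regressor: the supremum over couplings of
`Cov(X̃,Ỹ)/Var(X̃)` equals `E[(F_{X_o}⁻¹(U) − E[X_o]) F_Y⁻¹(U)] / Var(X_o)`, and it is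
attained. -/
theorem stmt_9 (μ ν : Measure ℝ) [IsProbabilityMeasure μ] [IsProbabilityMeasure ν]
    (hμ2 : Integrable (fun x => x ^ 2) μ) (hν2 : Integrable (fun y => y ^ 2) ν)
    (hvar : 0 < (∫ x, x ^ 2 ∂μ) - (∫ x, x ∂μ) ^ 2) :
    IsGreatest {s : ℝ | ∃ π : Measure (ℝ × ℝ), π.fst = μ ∧ π.snd = ν ∧
        Integrable (fun q => q.1 * q.2) π ∧
        s = ((∫ q, q.1 * q.2 ∂π) - (∫ x, x ∂μ) * (∫ y, y ∂ν))
              / ((∫ x, x ^ 2 ∂μ) - (∫ x, x ∂μ) ^ 2)}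
      ((∫ t in Set.Ioc (0:ℝ) 1, (qf μ t - ∫ x, x ∂μ) * qf ν t)
          / ((∫ x, x ^ 2 ∂μ) - (∫ x, x ∂μ) ^ 2)) := by
  have hnum : ∫ t in Ioc 0 1, (qf μ t - ∫ x, x ∂μ) * qf ν t
      = ∫ q, q.1 * q.2 ∂(comonotoneCoupling μ ν) - (∫ x, x ∂μ) * ∫ y, y ∂ν := by
    simp only [integral_Ioc_eq_integral_Ioo, sub_mul]
    rw [integral_sub ?_ ?_, integral_const_mul, integral_qf, integral_mul_comonotoneCoupling]
    exacts [(memLp_qf hμ2).integrable_mul (memLp_qf hν2),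
      ((memLp_qf hν2).integrable one_le_two).const_mul _]
  refine ⟨⟨comonotoneCoupling μ ν, comonotoneCoupling_fst μ ν, comonotoneCoupling_snd μ ν,
    integrable_mul_comonotoneCoupling hμ2 hν2, by rw [hnum]⟩, ?_⟩
  rintro _ ⟨π, hfst, hsnd, hint, rfl⟩
  have : IsFiniteMeasure π := ⟨by rw [← Measure.fst_univ, hfst]; exact measure_lt_top μ univ⟩
  rw [hnum]
  refine div_le_div_of_nonneg_right (sub_le_sub_right ?_ _) hvar.le
  refine integral_mul_le_of_measure_Ioi_prod_le (hfst.trans (comonotoneCoupling_fst μ ν).symm)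
    (hsnd.trans (comonotoneCoupling_snd μ ν).symm) hint (integrable_mul_comonotoneCoupling hμ2 hν2)
    fun s t => ?_
  rw [comonotoneCoupling_Ioi_prod_Ioi, ← hfst, ← hsnd]
  exact measure_prod_le_min_fst_snd π _ _
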